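/- arXiv:2507.07912 — 4 statements merged into one kernel-verified Lean document; each statement's English description precedes it below -/
import Mathlib

section
/- Let n ≥ 1 and let L_ideal, L_star be n×n complex matrices, with L_ideal = V D V⁻¹ for an invertible matrix V and diagonal matrix D, and with L_star diagonalizable. If ‖L_star − L_ideal‖_F < (π − ρ(L_ideal)) / κ(V), then: (i) every eigenvalue μ of L_star satisfies |Im(μ)| < π; (ii) the map μ ↦ exp(μ) is injective on the set of eigenvalues of L_star; and (iii) for every eigenvalue μ of L_star, the eigenspace ker(L_star − μ·I) equals the eigenspace ker(exp(L_star) − e^μ·I) of the matrix exponential exp(L_star). In particular, L_star is a logarithm of E_star = exp(L_star) lying in the principal branch and no eigenspace splitting occurs. -/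
open scoped Matrix

/-- The Frobenius norm of a complex matrix: `‖M‖_F = sqrt (∑ j k, |M j k|²)`. -/
noncomputable def frobNorm {m n : Type*} [Fintype m] [Fintype n] (M : Matrix m n ℂ) : ℝ :=
  Real.sqrt (∑ j, ∑ k, ‖M j k‖ ^ 2)

/-- The spectral radius of a square complex matrix: the maximum modulus of its eigenvalues. -/
noncomputable def specRad {n : Type*} [Fintype n] [DecidableEq n] (A : Matrix n n ℂ) : ℝ :=
  sSup {r : ℝ | ∃ μ ∈ spectrum ℂ A, r = ‖μ‖}

/-!
By the Bauer–Fike theorem (in Frobenius norms), every eigenvalue of `L_star` lies within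
`κ(V) ‖L_star - L_ideal‖_F < π - ρ(L_ideal)` of some eigenvalue of `L_ideal`, so it has modulus,
hence imaginary part, less than `π`. On the strip `|Im z| < π` the exponential is injective, since
the principal logarithm inverts it there. Writing `L_star = W diag(f) W⁻¹`, we get
`exp L_star = W diag(exp ∘ f) W⁻¹`; a vector is an eigenvector for `μ` (resp. `e^μ`) iff its
coordinates `W⁻¹ v` vanish outside `{i | f i = μ}` (resp. `{i | e^(f i) = e^μ}`), and injectivity
makes these index sets equal.
-/

open Matrix WithLp

theorem Complex.injOn_exp_of_abs_im_lt_pi : Set.InjOn Complex.exp {z : ℂ | |z.im| < Real.pi} := by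
  have hlog : ∀ z : ℂ, |z.im| < Real.pi → Complex.log (Complex.exp z) = z := fun z hz =>
    Complex.log_exp (abs_lt.mp hz).1 (abs_lt.mp hz).2.le
  intro x hx y hy hxy
  rw [← hlog x hx, hxy, hlog y hy]

namespace Matrix

variable {ι : Type*} [Fintype ι]

theorem frobNorm_nonneg {m : Type*} [Fintype m] (A : Matrix m ι ℂ) : 0 ≤ frobNorm A :=
  Real.sqrt_nonneg _

section Frobenius

attribute [local instance] frobeniusNormedAddCommGroup

theorem frobNorm_eq_norm {m : Type*} [Fintype m] (A : Matrix m ι ℂ) : frobNorm A = ‖A‖ := by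
  rw [frobNorm, frobenius_norm_def, Real.sqrt_eq_rpow]
  simp only [Real.rpow_two]

theorem norm_mulVec_le_frobNorm_mul {m : Type*} [Fintype m] (A : Matrix m ι ℂ) (x : ι → ℂ) :
    ‖toLp 2 (A *ᵥ x)‖ ≤ frobNorm A * ‖toLp 2 x‖ := by
  rw [frobNorm_eq_norm, ← frobenius_norm_replicateCol (ι := Unit),
    ← frobenius_norm_replicateCol (ι := Unit), replicateCol_mulVec]
  exact frobenius_norm_mul _ _

end Frobenius

variable [DecidableEq ι]

theorem mul_norm_le_norm_diagonal_mulVec {w : ι → ℂ} {c : ℝ} (hc : 0 ≤ c) (h : ∀ i, c ≤ ‖w i‖)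
    (u : ι → ℂ) : c * ‖toLp 2 u‖ ≤ ‖toLp 2 (diagonal w *ᵥ u)‖ := by
  refine le_of_pow_le_pow_left₀ two_ne_zero (norm_nonneg _) ?_
  simp only [mul_pow, EuclideanSpace.norm_sq_eq, Finset.mul_sum, mulVec_diagonal, norm_mul]
  exact Finset.sum_le_sum fun i _ =>
    mul_le_mul_of_nonneg_right (pow_le_pow_left₀ hc (h i) 2) (sq_nonneg _)

theorem norm_le_specRad {A : Matrix ι ι ℂ} {μ : ℂ} (hμ : μ ∈ spectrum ℂ A) :
    ‖μ‖ ≤ specRad A := by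
  refine le_csSup ?_ ⟨μ, hμ, rfl⟩
  obtain ⟨C, hC⟩ := ((finite_spectrum A).image (‖·‖)).bddAbove
  exact ⟨C, by rintro _ ⟨ν, hν, rfl⟩; exact hC ⟨ν, hν, rfl⟩⟩

section Field

variable {K : Type*} [Field K]

theorem exists_mulVec_eq_smul_of_mem_spectrum {A : Matrix ι ι K} {μ : K}
    (hμ : μ ∈ spectrum K A) : ∃ v ≠ 0, A *ᵥ v = μ • v := by
  rw [← spectrum_toLin', ← Module.End.hasEigenvalue_iff_mem_spectrum] at hμ
  obtain ⟨v, hv⟩ := hμ.exists_hasEigenvector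
  exact ⟨v, hv.2, by simpa using hv.apply_eq_smul⟩

theorem spectrum_conj {W : Matrix ι ι K} (hW : IsUnit W) (A : Matrix ι ι K) :
    spectrum K (W * A * W⁻¹) = spectrum K A := by
  obtain ⟨u, rfl⟩ := hW
  rw [← coe_units_inv]
  exact spectrum.units_conjugate

theorem conj_mulVec_eq_smul_iff {W : Matrix ι ι K} (hW : IsUnit W) (A : Matrix ι ι K) (c : K)
    (v : ι → K) :
    (W * A * W⁻¹) *ᵥ v = c • v ↔ A *ᵥ (W⁻¹ *ᵥ v) = c • (W⁻¹ *ᵥ v) := by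
  rw [← (mulVec_injective_of_isUnit (isUnit_nonsing_inv_iff.mpr hW)).eq_iff, mulVec_smul,
    mulVec_mulVec, mulVec_mulVec, ← mul_assoc, ← mul_assoc,
    nonsing_inv_mul _ ((isUnit_iff_isUnit_det W).mp hW), one_mul]

theorem conj_diagonal_mulVec_eq_smul_iff {W : Matrix ι ι K} (hW : IsUnit W) (f : ι → K) (c : K)
    (v : ι → K) :
    (W * diagonal f * W⁻¹) *ᵥ v = c • v ↔ ∀ i, f i = c ∨ (W⁻¹ *ᵥ v) i = 0 := by
  simp only [conj_mulVec_eq_smul_iff hW, funext_iff, mulVec_diagonal, Pi.smul_apply,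
    smul_eq_mul, mul_eq_mul_right_iff]

theorem setOf_conj_diagonal_mulVec_eq_smul_congr {W : Matrix ι ι K} (hW : IsUnit W)
    {f g : ι → K} {c c' : K} (h : ∀ i, f i = c ↔ g i = c') :
    {v | (W * diagonal f * W⁻¹) *ᵥ v = c • v} = {v | (W * diagonal g * W⁻¹) *ᵥ v = c' • v} := by
  ext v
  simp only [Set.mem_ofPred_eq, conj_diagonal_mulVec_eq_smul_iff hW, h]

end Field

theorem exists_norm_sub_le_of_mem_spectrum {V : Matrix ι ι ℂ} (hV : IsUnit V) (d : ι → ℂ)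
    {M : Matrix ι ι ℂ} {μ : ℂ} (hμ : μ ∈ spectrum ℂ M) :
    ∃ i, ‖μ - d i‖ ≤ frobNorm V * frobNorm V⁻¹ * frobNorm (M - V * diagonal d * V⁻¹) := by
  obtain ⟨v, hv0, hv⟩ := exists_mulVec_eq_smul_of_mem_spectrum hμ
  have hdet : IsUnit V.det := (isUnit_iff_isUnit_det V).mp hV
  set E := M - V * diagonal d * V⁻¹
  set u := V⁻¹ *ᵥ v
  have hvu : V *ᵥ u = v := by rw [mulVec_mulVec, mul_nonsing_inv _ hdet, one_mulVec]
  have hu0 : u ≠ 0 := fun h => hv0 (by rw [← hvu, h, mulVec_zero])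
  have hconj : V⁻¹ *ᵥ ((V * diagonal d * V⁻¹) *ᵥ v) = diagonal d *ᵥ u := by
    rw [mulVec_mulVec, ← mul_assoc, ← mul_assoc, nonsing_inv_mul _ hdet, one_mul]
    exact (mulVec_mulVec _ _ _).symm
  have hperturb : diagonal (fun j => μ - d j) *ᵥ u = V⁻¹ *ᵥ (E *ᵥ (V *ᵥ u)) := by
    rw [hvu, sub_mulVec, mulVec_sub, hv, mulVec_smul, hconj]
    ext j
    simp only [mulVec_diagonal, Pi.sub_apply, Pi.smul_apply, smul_eq_mul, sub_mul, u]
  obtain ⟨j, -⟩ := Function.ne_iff.mp hu0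
  obtain ⟨i, -, hi⟩ := Finset.univ.exists_min_image (fun i => ‖μ - d i‖) ⟨j, Finset.mem_univ j⟩
  refine ⟨i, le_of_mul_le_mul_right ?_ (norm_pos_iff.mpr ((toLp_eq_zero 2).not.mpr hu0))⟩
  calc ‖μ - d i‖ * ‖toLp 2 u‖
      ≤ ‖toLp 2 (diagonal (fun j => μ - d j) *ᵥ u)‖ :=
        mul_norm_le_norm_diagonal_mulVec (norm_nonneg _) (fun j => hi j (Finset.mem_univ j)) u
    _ ≤ frobNorm V⁻¹ * (frobNorm E * (frobNorm V * ‖toLp 2 u‖)) := by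
        rw [hperturb]
        refine (norm_mulVec_le_frobNorm_mul _ _).trans ?_
        gcongr
        · exact frobNorm_nonneg _
        refine (norm_mulVec_le_frobNorm_mul _ _).trans ?_
        gcongr
        · exact frobNorm_nonneg _
        exact norm_mulVec_le_frobNorm_mul _ _
    _ = frobNorm V * frobNorm V⁻¹ * frobNorm E * ‖toLp 2 u‖ := by ring

theorem norm_lt_of_mem_spectrum_of_frobNorm_sub_lt {V : Matrix ι ι ℂ} (hV : IsUnit V)
    (d : ι → ℂ) {M : Matrix ι ι ℂ} {r : ℝ}
    (hM : frobNorm (M - V * diagonal d * V⁻¹) <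
      (r - specRad (V * diagonal d * V⁻¹)) / (frobNorm V * frobNorm V⁻¹))
    {μ : ℂ} (hμ : μ ∈ spectrum ℂ M) : ‖μ‖ < r := by
  have hκε : frobNorm V * frobNorm V⁻¹ * frobNorm (M - V * diagonal d * V⁻¹) <
      r - specRad (V * diagonal d * V⁻¹) := by
    rcases (mul_nonneg (frobNorm_nonneg V) (frobNorm_nonneg V⁻¹)).eq_or_lt with hκ | hκ
    -- for `κ = 0` the bound `(r - ρ) / κ` is the junk value `0`, which `hM` cannot undercut
    · rw [← hκ, div_zero] at hM
      exact absurd hM (frobNorm_nonneg _).not_gt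
    · rwa [lt_div_iff₀' hκ] at hM
  obtain ⟨i, hi⟩ := exists_norm_sub_le_of_mem_spectrum hV d hμ
  have hdi : ‖d i‖ ≤ specRad (V * diagonal d * V⁻¹) :=
    norm_le_specRad (by rw [spectrum_conj hV, spectrum_diagonal]; exact ⟨i, rfl⟩)
  calc ‖μ‖ ≤ ‖d i‖ + ‖μ - d i‖ := norm_le_norm_add_norm_sub' μ _
    _ < r := by linarith

theorem exp_conj_diagonal {W : Matrix ι ι ℂ} (hW : IsUnit W) (f : ι → ℂ) :
    NormedSpace.exp (W * diagonal f * W⁻¹) = W * diagonal (fun i => Complex.exp (f i)) * W⁻¹ := by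
  rw [exp_conj _ _ hW, exp_diagonal, Complex.exp_eq_exp_ℂ, Pi.exp_def]

end Matrix

theorem stmt1_general (n : ℕ) (Lideal Lstar V D : Matrix (Fin n) (Fin n) ℂ)
    (hV : IsUnit V) (hD : D.IsDiag) (hdiag : Lideal = V * D * V⁻¹)
    (hstar : ∃ (W Dstar : Matrix (Fin n) (Fin n) ℂ),
      IsUnit W ∧ Dstar.IsDiag ∧ Lstar = W * Dstar * W⁻¹)
    (hclose : frobNorm (Lstar - Lideal) <
      (Real.pi - specRad Lideal) / (frobNorm V * frobNorm V⁻¹)) :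
    (∀ μ ∈ spectrum ℂ Lstar, |μ.im| < Real.pi) ∧
    Set.InjOn Complex.exp (spectrum ℂ Lstar) ∧
    (∀ μ ∈ spectrum ℂ Lstar,
      {v : Fin n → ℂ | Lstar *ᵥ v = μ • v} =
        {v : Fin n → ℂ | (NormedSpace.exp Lstar) *ᵥ v = Complex.exp μ • v}) := by
  obtain ⟨W, Dstar, hW, hDstar, rfl⟩ := hstar
  rw [← hD.diagonal_diag] at hdiag
  subst hdiag
  rw [← hDstar.diagonal_diag] at hclose ⊢
  have him : ∀ μ ∈ spectrum ℂ (W * diagonal Dstar.diag * W⁻¹), |μ.im| < Real.pi :=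
    fun μ hμ => (Complex.abs_im_le_norm μ).trans_lt
      (norm_lt_of_mem_spectrum_of_frobNorm_sub_lt hV D.diag hclose hμ)
  have hinj := Complex.injOn_exp_of_abs_im_lt_pi.mono him
  refine ⟨him, hinj, fun μ hμ => ?_⟩
  rw [exp_conj_diagonal hW]
  refine setOf_conj_diagonal_mulVec_eq_smul_congr hW fun i =>
    ⟨congrArg Complex.exp, fun h => hinj ?_ hμ h⟩
  rw [spectrum_conj hW, spectrum_diagonal]
  exact ⟨i, rfl⟩

/-- If `L_ideal = V D V⁻¹`, `L_star` is diagonalizable and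
`‖L_star − L_ideal‖_F < (π − ρ(L_ideal)) / κ(V)`, then (i) every eigenvalue `μ` of `L_star`
has `|Im μ| < π`, (ii) `exp` is injective on the spectrum of `L_star`, and (iii) for every
eigenvalue `μ` of `L_star` the eigenspace of `L_star` for `μ` equals the eigenspace of the
matrix exponential `exp L_star` for `e^μ`. -/
theorem stmt1 (n : ℕ) (hn : 1 ≤ n) (Lideal Lstar V D : Matrix (Fin n) (Fin n) ℂ)
    (hV : IsUnit V) (hD : D.IsDiag) (hdiag : Lideal = V * D * V⁻¹)
    (hstar : ∃ (W Dstar : Matrix (Fin n) (Fin n) ℂ),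
      IsUnit W ∧ Dstar.IsDiag ∧ Lstar = W * Dstar * W⁻¹)
    (hclose : frobNorm (Lstar - Lideal) <
      (Real.pi - specRad Lideal) / (frobNorm V * frobNorm V⁻¹)) :
    (∀ μ ∈ spectrum ℂ Lstar, |μ.im| < Real.pi) ∧
    Set.InjOn Complex.exp (spectrum ℂ Lstar) ∧
    (∀ μ ∈ spectrum ℂ Lstar,
      {v : Fin n → ℂ | Lstar *ᵥ v = μ • v} =
        {v : Fin n → ℂ | (NormedSpace.exp Lstar) *ᵥ v = Complex.exp μ • v}) :=
  stmt1_general n Lideal Lstar V D hV hD hdiag hstar hclose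
end

section
/- Let n ≥ 1 and let E be an n×n complex matrix that is diagonalizable with n pairwise distinct eigenvalues. If A is an n×n complex matrix with exp(A) = E, then every eigenvector of E is an eigenvector of A; moreover, if v is a common eigenvector with E v = μ v and A v = α v, then exp(α) = μ. Consequently A is diagonalizable in the same eigenbasis as E, with each eigenvalue of A a logarithm of the corresponding eigenvalue of E. -/
open scoped Matrix

/-! Conjugating by `V` turns `exp A = V (diagonal μ) V⁻¹` into `exp B = diagonal μ` with
`B = V⁻¹ A V`. Since `B` commutes with its exponential, it commutes with a diagonal matrix
whose entries are pairwise distinct, which forces `B` itself to be diagonal; comparing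
diagonals of `exp B = diagonal μ` then shows that its entries are logarithms of the `μ i`.
An eigenvector of `V (diagonal μ) V⁻¹` is `V x` with `x` supported on the single coordinate
`j` where `μ j` is the eigenvalue, so it is also an eigenvector of `V (diagonal α) V⁻¹`. -/

namespace Matrix

variable {m R : Type*} [Fintype m] [DecidableEq m]

section Diagonal

variable [CommRing R] [NoZeroDivisors R] {μ : m → R}

theorem eq_diagonal_of_commute_diagonal (hμ : Function.Injective μ) {B : Matrix m m R}
    (h : Commute (diagonal μ) B) : B = diagonal fun i => B i i := by
  ext i j
  rcases eq_or_ne i j with rfl | hij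
  · simp
  · have hentry : (μ i - μ j) * B i j = 0 := by
      have := congrFun (congrFun h.eq i) j
      rw [diagonal_mul, mul_diagonal] at this
      rw [sub_mul, this, mul_comm, sub_self]
    simpa [diagonal_apply_ne _ hij, sub_ne_zero.mpr (hμ.ne hij)] using hentry

theorem diagonal_mulVec_eq_smul_of_mulVec_eq_smul (hμ : Function.Injective μ) (α : m → R)
    {x : m → R} {c : R} {j : m} (hx : diagonal μ *ᵥ x = c • x) (hxj : x j ≠ 0) :
    μ j = c ∧ diagonal α *ᵥ x = α j • x := by
  have hcoord : ∀ k, x k ≠ 0 → μ k = c := fun k hk =>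
    mul_right_cancel₀ hk (by simpa [mulVec_diagonal] using congrFun hx k)
  refine ⟨hcoord j hxj, funext fun k => ?_⟩
  by_cases hk : x k = 0
  · simp [mulVec_diagonal, hk]
  · have : k = j := hμ ((hcoord k hk).trans (hcoord j hxj).symm)
    simp [mulVec_diagonal, this]

theorem exists_mulVec_eq_smul_of_conj_diagonal {V : Matrix m m R} (hV : IsUnit V)
    (hμ : Function.Injective μ) (α : m → R) {v : m → R} (hv : v ≠ 0) {c : R}
    (h : (V * diagonal μ * V⁻¹) *ᵥ v = c • v) :
    ∃ j, μ j = c ∧ (V * diagonal α * V⁻¹) *ᵥ v = α j • v := by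
  have hdet : IsUnit V.det := (isUnit_iff_isUnit_det V).mp hV
  set x := V⁻¹ *ᵥ v with hx
  have hvx : V *ᵥ x = v := by rw [hx, mulVec_mulVec, mul_nonsing_inv V hdet, one_mulVec]
  have hdiag : diagonal μ *ᵥ x = c • x := by
    have := congrArg (V⁻¹ *ᵥ ·) h
    rwa [mulVec_mulVec, mulVec_smul, ← mul_assoc, ← mul_assoc, nonsing_inv_mul V hdet, one_mul,
      ← mulVec_mulVec] at this
  obtain ⟨j, hxj⟩ : ∃ j, x j ≠ 0 := by
    by_contra! hx0
    exact hv (by rw [← hvx, show x = 0 from funext hx0, mulVec_zero])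
  obtain ⟨hμj, hαx⟩ := diagonal_mulVec_eq_smul_of_mulVec_eq_smul hμ α hdiag hxj
  refine ⟨j, hμj, ?_⟩
  rw [← mulVec_mulVec, ← mulVec_mulVec, ← hx, hαx, mulVec_smul, hvx]

end Diagonal

theorem exists_eq_diagonal_of_exp_eq_diagonal {𝕜 : Type*} [NormedField 𝕜]
    [NormedAlgebra ℚ 𝕜] [CompleteSpace 𝕜] {B : Matrix m m 𝕜} {μ : m → 𝕜}
    (hμ : Function.Injective μ) (hB : NormedSpace.exp B = diagonal μ) :
    ∃ α : m → 𝕜, B = diagonal α ∧ ∀ i, NormedSpace.exp (α i) = μ i := by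
  have hcomm : Commute (diagonal μ) B := hB ▸ (Commute.refl B).exp_left
  have hdiag := eq_diagonal_of_commute_diagonal hμ hcomm
  refine ⟨fun i => B i i, hdiag, fun i => ?_⟩
  have := congrFun (congrFun hB i) i
  rwa [hdiag, exp_diagonal, diagonal_apply_eq, diagonal_apply_eq, Pi.coe_exp] at this

end Matrix

theorem stmt5_general (n : ℕ) (E A V : Matrix (Fin n) (Fin n) ℂ) (μ : Fin n → ℂ)
    (hV : IsUnit V) (hμ : Function.Injective μ) (hE : E = V * Matrix.diagonal μ * V⁻¹)
    (hA : NormedSpace.exp A = E) :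
    (∀ v : Fin n → ℂ, v ≠ 0 → ∀ c : ℂ, E *ᵥ v = c • v →
      ∃ α : ℂ, A *ᵥ v = α • v ∧ Complex.exp α = c) ∧
    (∃ α : Fin n → ℂ, A = V * Matrix.diagonal α * V⁻¹ ∧ ∀ i, Complex.exp (α i) = μ i) := by
  have hdet : IsUnit V.det := (Matrix.isUnit_iff_isUnit_det V).mp hV
  have hconj : NormedSpace.exp (V⁻¹ * A * V) = Matrix.diagonal μ := by
    rw [Matrix.exp_conj' V A hV, hA, hE, mul_assoc, Matrix.nonsing_inv_mul_cancel_right V _ hdet,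
      Matrix.nonsing_inv_mul_cancel_left V _ hdet]
  obtain ⟨α, hB, hα⟩ := Matrix.exists_eq_diagonal_of_exp_eq_diagonal hμ hconj
  have hAα : A = V * Matrix.diagonal α * V⁻¹ := by
    rw [← hB, ← mul_assoc, ← mul_assoc, Matrix.mul_nonsing_inv V hdet, one_mul,
      Matrix.mul_nonsing_inv_cancel_right V _ hdet]
  have hexp : ∀ i, Complex.exp (α i) = μ i := by simpa only [Complex.exp_eq_exp_ℂ] using hα
  refine ⟨fun v hv c hvc => ?_, α, hAα, hexp⟩
  obtain ⟨j, rfl, hj⟩ :=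
    Matrix.exists_mulVec_eq_smul_of_conj_diagonal hV hμ α hv (hE ▸ hvc)
  exact ⟨α j, hAα ▸ hj, hexp j⟩

/-- Let `E = V (diagonal μ) V⁻¹` be diagonalizable with `n` pairwise distinct
eigenvalues, and let `A` satisfy `exp A = E` (matrix exponential). Then every eigenvector of
`E` is an eigenvector of `A`, the corresponding scalar eigenvalues satisfy `exp α = c`, and
`A` is diagonalizable in the same eigenbasis with eigenvalues that are logarithms of the
corresponding eigenvalues of `E`. -/
theorem stmt5 (n : ℕ) (hn : 1 ≤ n) (E A V : Matrix (Fin n) (Fin n) ℂ) (μ : Fin n → ℂ)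
    (hV : IsUnit V) (hμ : Function.Injective μ) (hE : E = V * Matrix.diagonal μ * V⁻¹)
    (hA : NormedSpace.exp A = E) :
    (∀ v : Fin n → ℂ, v ≠ 0 → ∀ c : ℂ, E *ᵥ v = c • v →
      ∃ α : ℂ, A *ᵥ v = α • v ∧ Complex.exp α = c) ∧
    (∃ α : Fin n → ℂ, A = V * Matrix.diagonal α * V⁻¹ ∧ ∀ i, Complex.exp (α i) = μ i) :=
  stmt5_general n E A V μ hV hμ hE hA
end

section
/- Let d ≥ 1, let H ∈ M_d(ℂ) be Hermitian, let J₁,…,J_N ∈ M_d(ℂ) be traceless matrices, let γ₁,…,γ_N be real numbers, and let L be the associated elementary-basis Lindbladian matrix. Then for every traceless Hermitian matrix P ∈ M_d(ℂ), setting z = Tr( L · (P ⊗ I) ), one has Tr(P H) = i·(z − conj(z)) / (2d). In particular the Hamiltonian component of L can be recovered from the traces Tr( L · (P ⊗ I) ). -/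
open scoped Matrix Kronecker

/-- Entrywise complex conjugation of a matrix. -/
def mconj {d : ℕ} (J : Matrix (Fin d) (Fin d) ℂ) : Matrix (Fin d) (Fin d) ℂ :=
  J.map (starRingEnd ℂ)

/-- The elementary-basis Lindbladian matrix
`L = i(I ⊗ Hᵀ − H ⊗ I) + ∑ α, γ_α [ J_α ⊗ conj(J_α) − ½( J_α† J_α ⊗ I + I ⊗ J_αᵀ conj(J_α) ) ]`. -/
noncomputable def lindbladMat {d N : ℕ} (H : Matrix (Fin d) (Fin d) ℂ)
    (J : Fin N → Matrix (Fin d) (Fin d) ℂ) (γ : Fin N → ℝ) :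
    Matrix (Fin d × Fin d) (Fin d × Fin d) ℂ :=
  Complex.I • ((1 : Matrix (Fin d) (Fin d) ℂ) ⊗ₖ Hᵀ - H ⊗ₖ (1 : Matrix (Fin d) (Fin d) ℂ)) +
    ∑ α, (γ α : ℂ) • ((J α) ⊗ₖ mconj (J α) -
      (1 / 2 : ℂ) • (((J α)ᴴ * J α) ⊗ₖ (1 : Matrix (Fin d) (Fin d) ℂ) +
        (1 : Matrix (Fin d) (Fin d) ℂ) ⊗ₖ ((J α)ᵀ * mconj (J α))))

lemma mconj_trace {d : ℕ} (J : Matrix (Fin d) (Fin d) ℂ) :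
    (mconj J).trace = (starRingEnd ℂ) J.trace := by
  simp [mconj, Matrix.trace, Matrix.diag, map_sum]

lemma conj_trace_herm_mul {d : ℕ} (A B : Matrix (Fin d) (Fin d) ℂ)
    (hA : A.IsHermitian) (hB : B.IsHermitian) :
    (starRingEnd ℂ) ((A * B).trace) = (A * B).trace := by
  rw [starRingEnd_apply, ← Matrix.trace_conjTranspose, Matrix.conjTranspose_mul, hA.eq, hB.eq,
    Matrix.trace_mul_comm]

/-- For `H` Hermitian, traceless jump operators `J_α`, real `γ_α`, and every
traceless Hermitian `P`, setting `z = Tr(L·(P ⊗ I))` one has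
`Tr(P H) = i·(z − conj z)/(2d)`. -/
theorem stmt14 (d N : ℕ) (hd : 1 ≤ d) (H : Matrix (Fin d) (Fin d) ℂ) (hH : H.IsHermitian)
    (J : Fin N → Matrix (Fin d) (Fin d) ℂ) (γ : Fin N → ℝ)
    (hJ : ∀ α, (J α).trace = 0)
    (P : Matrix (Fin d) (Fin d) ℂ) (hPtr : P.trace = 0) (hPherm : P.IsHermitian) :
    (P * H).trace =
      Complex.I * ((lindbladMat H J γ * (P ⊗ₖ (1 : Matrix (Fin d) (Fin d) ℂ))).trace -
          (starRingEnd ℂ) ((lindbladMat H J γ * (P ⊗ₖ (1 : Matrix (Fin d) (Fin d) ℂ))).trace)) /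
        (2 * (d : ℂ)) := by
  have hz : (lindbladMat H J γ * (P ⊗ₖ (1 : Matrix (Fin d) (Fin d) ℂ))).trace =
      -Complex.I * d * (H * P).trace -
        ∑ α, (γ α : ℂ) * ((1 / 2 : ℂ) * d * (((J α)ᴴ * J α * P).trace)) := by
    simp only [lindbladMat, add_mul, sub_mul, Matrix.smul_mul, Finset.sum_mul,
      ← Matrix.mul_kronecker_mul, Matrix.one_mul, Matrix.mul_one,
      Matrix.trace_add, Matrix.trace_sub, Matrix.trace_smul, Matrix.trace_sum,
      Matrix.trace_kronecker, mconj_trace, hJ, hPtr, Matrix.trace_one]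
    simp only [Fintype.card_fin, map_zero, mul_zero, zero_mul, smul_eq_mul, mul_sub, mul_add,
      zero_sub, add_zero, sub_zero, zero_add]
    ring_nf
    rw [sub_eq_add_neg, ← Finset.sum_neg_distrib]
    congr 1
    exact Finset.sum_congr rfl fun x _ => by ring
  have hHP : (starRingEnd ℂ) ((H * P).trace) = (H * P).trace :=
    conj_trace_herm_mul H P hH hPherm
  have hJJP : ∀ α, (starRingEnd ℂ) (((J α)ᴴ * J α * P).trace) = ((J α)ᴴ * J α * P).trace :=
    fun α => conj_trace_herm_mul _ P (Matrix.isHermitian_conjTranspose_mul_self (J α)) hPherm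
  rw [hz, Matrix.trace_mul_comm P H]
  rw [map_sub, map_sum]
  simp only [map_mul, map_neg, Complex.conj_I, map_natCast, map_ofNat, map_one, hHP, hJJP,
    map_div₀, Complex.conj_ofReal]
  have hd0 : (d : ℂ) ≠ 0 := by exact_mod_cast Nat.pos_of_ne_zero (by omega) |>.ne'
  field_simp
  ring_nf
  simp [Complex.I_sq]
end

section
/- Let d ≥ 1, let H ∈ M_d(ℂ), let J₁,…,J_N ∈ M_d(ℂ) be traceless matrices, let γ₁,…,γ_N be nonnegative real numbers, and let L be the associated elementary-basis Lindbladian matrix. Let P₁,…,P_m ∈ M_d(ℂ) be traceless Hermitian matrices and define the m×m complex matrix C by C_{jk} = Tr( L · (P_j ⊗ conj(P_k)) ). Then C is Hermitian positive semidefinite; indeed C = Σ_α γ_α v_α v_α† where v_α ∈ ℂ^m is the vector with entries (v_α)_j = Tr(P_j J_α). -/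
open scoped Matrix Kronecker ComplexOrder

/-!
Tracing `L` against `P ⊗ conj Q` factorises termwise as `Tr(A P) · Tr(B conj Q)` for each
summand `A ⊗ B` of `L`. When `P` and `Q` are traceless, every summand with an identity factor
therefore drops out, including the whole Hamiltonian part, and only the jump terms
`γ_α J_α ⊗ conj J_α` survive, contributing `γ_α Tr(P J_α) conj Tr(Q J_α)`.
So `C` is a nonnegative combination of the rank-one matrices `v_α v_α†`.
-/

lemma trace_mconj {d : ℕ} (A : Matrix (Fin d) (Fin d) ℂ) :
    (mconj A).trace = star A.trace := by
  simp [mconj, Matrix.trace]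

lemma mconj_mul {d : ℕ} (A B : Matrix (Fin d) (Fin d) ℂ) :
    mconj (A * B) = mconj A * mconj B :=
  Matrix.map_mul

lemma trace_lindbladMat_mul_kronecker_mconj {d N : ℕ} (H : Matrix (Fin d) (Fin d) ℂ)
    (J : Fin N → Matrix (Fin d) (Fin d) ℂ) (γ : Fin N → ℝ) {P Q : Matrix (Fin d) (Fin d) ℂ}
    (hP : P.trace = 0) (hQ : Q.trace = 0) :
    (lindbladMat H J γ * (P ⊗ₖ mconj Q)).trace =
      ∑ α, (γ α : ℂ) * ((P * J α).trace * star (Q * J α).trace) := by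
  have hQ' : (mconj Q).trace = 0 := by rw [trace_mconj, hQ, star_zero]
  simp only [lindbladMat, add_mul, sub_mul, smul_mul_assoc, Finset.sum_mul,
    ← Matrix.mul_kronecker_mul, Matrix.one_mul, ← mconj_mul, Matrix.trace_add, Matrix.trace_sub,
    Matrix.trace_sum, Matrix.trace_smul, Matrix.trace_kronecker, trace_mconj, hP, hQ', mul_zero,
    zero_mul, add_zero, sub_zero, sub_self, zero_add, smul_eq_mul]
  simp only [Matrix.trace_mul_comm (J _)]

theorem stmt16_general (d N m : ℕ) (H : Matrix (Fin d) (Fin d) ℂ)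
    (J : Fin N → Matrix (Fin d) (Fin d) ℂ) (γ : Fin N → ℝ)
    (hγ : ∀ α, 0 ≤ γ α)
    (P : Fin m → Matrix (Fin d) (Fin d) ℂ)
    (hPtr : ∀ j, (P j).trace = 0) :
    (Matrix.of fun j k : Fin m =>
        (lindbladMat H J γ * (P j ⊗ₖ mconj (P k))).trace).PosSemidef ∧
    (Matrix.of fun j k : Fin m =>
        (lindbladMat H J γ * (P j ⊗ₖ mconj (P k))).trace) =
      ∑ α, (γ α : ℂ) •
        Matrix.vecMulVec (fun j => (P j * J α).trace) (star fun j => (P j * J α).trace) := by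
  have hC : (Matrix.of fun j k : Fin m =>
        (lindbladMat H J γ * (P j ⊗ₖ mconj (P k))).trace) =
      ∑ α, (γ α : ℂ) •
        Matrix.vecMulVec (fun j => (P j * J α).trace) (star fun j => (P j * J α).trace) := by
    ext j k
    simp [trace_lindbladMat_mul_kronecker_mconj H J γ (hPtr j) (hPtr k), Matrix.sum_apply,
      Matrix.vecMulVec_apply]
  refine ⟨hC ▸ Matrix.posSemidef_sum _ fun α _ => ?_, hC⟩
  exact (Matrix.posSemidef_vecMulVec_self_star _).smul (by exact_mod_cast hγ α)

/-- For nonnegative `γ_α`, traceless jump operators `J_α`, and traceless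
Hermitian matrices `P₁,…,P_m`, the matrix `C` with `C_{jk} = Tr(L·(P_j ⊗ conj P_k))` is
Hermitian positive semidefinite; indeed `C = ∑ α, γ_α v_α v_α†` with `(v_α)_j = Tr(P_j J_α)`. -/
theorem stmt16 (d N m : ℕ) (hd : 1 ≤ d) (H : Matrix (Fin d) (Fin d) ℂ)
    (J : Fin N → Matrix (Fin d) (Fin d) ℂ) (γ : Fin N → ℝ)
    (hγ : ∀ α, 0 ≤ γ α) (hJ : ∀ α, (J α).trace = 0)
    (P : Fin m → Matrix (Fin d) (Fin d) ℂ)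
    (hPtr : ∀ j, (P j).trace = 0) (hPherm : ∀ j, (P j).IsHermitian) :
    (Matrix.of fun j k : Fin m =>
        (lindbladMat H J γ * (P j ⊗ₖ mconj (P k))).trace).PosSemidef ∧
    (Matrix.of fun j k : Fin m =>
        (lindbladMat H J γ * (P j ⊗ₖ mconj (P k))).trace) =
      ∑ α, (γ α : ℂ) •
        Matrix.vecMulVec (fun j => (P j * J α).trace) (star fun j => (P j * J α).trace) :=
  stmt16_general d N m H J γ hγ P hPtr
end
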